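/- For n ≥ 3 and p,q,p′,q′ ≥ 1 with p+q = p′+q′ = n−1, the identity x^p h x^q k ≈ h x^{p′} k x^{q′} is equationally equivalent to the pair of identities x^p h x^q ≈ h x^{n−1} and x^{n−1} k ≈ x^{p′} k x^{q′}. -/

import Mathlib

/-! The pair gives the single identity through the intermediate word `h x^{n-1} k`. Conversely,
substituting the empty word for `k` (resp. `h`) in the single identity gives each identity of the
pair, because `x^{p'} x^{q'} = x^{p} x^{q} = x^{n-1}`. -/

abbrev Word := List ℕ

def subst (φ : ℕ → Word) (w : Word) : Word := w.flatMap φ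

inductive Deduce (S : Set (Word × Word)) : Word → Word → Prop
  | refl (w : Word) : Deduce S w w
  | symm {u v : Word} : Deduce S u v → Deduce S v u
  | trans {u v w : Word} : Deduce S u v → Deduce S v w → Deduce S u w
  | step (a b : Word) (φ : ℕ → Word) {s t : Word} (h : (s, t) ∈ S) :
      Deduce S (a ++ subst φ s ++ b) (a ++ subst φ t ++ b)

def FM (w : Word) : Type := Option {u : Word // u <:+: w}

def fmul {w : Word} : FM w → FM w → FM w
  | some u, some v =>
      if h : (u.1 ++ v.1) <:+: w then some ⟨u.1 ++ v.1, h⟩ else none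
  | _, _ => none

def fone (w : Word) : FM w := some ⟨[], List.nil_infix⟩

theorem fmul_none_left {w : Word} (a : FM w) : fmul none a = none := rfl

theorem fmul_none_right {w : Word} (a : FM w) : fmul a none = none := by
  rcases a with _ | u <;> rfl

theorem fmul_some {w : Word} (u v : {u : Word // u <:+: w}) :
    fmul (some u) (some v) =
      if h : (u.1 ++ v.1) <:+: w then some ⟨u.1 ++ v.1, h⟩ else none := rfl

theorem fmul_assoc {w : Word} (a b c : FM w) : fmul (fmul a b) c = fmul a (fmul b c) := by
  rcases a with _ | u
  · rfl
  rcases b with _ | v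
  · rfl
  rcases c with _ | t
  · exact (fmul_none_right _).trans (fmul_none_right _).symm
  rw [fmul_some, fmul_some]
  by_cases h : (u.1 ++ v.1 ++ t.1) <:+: w
  · have h1 : (u.1 ++ v.1) <:+: w := List.IsInfix.trans ⟨[], t.1, by simp⟩ h
    have h2 : (v.1 ++ t.1) <:+: w := List.IsInfix.trans ⟨u.1, [], by simp⟩ h
    rw [dif_pos h1, fmul_some, dif_pos h2, fmul_some, dif_pos h,
      dif_pos (show (u.1 ++ (v.1 ++ t.1)) <:+: w by simpa [List.append_assoc] using h)]
    simp [List.append_assoc]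
    rfl
  · by_cases h1 : (u.1 ++ v.1) <:+: w
    · rw [dif_pos h1, fmul_some, dif_neg h]
      by_cases h2 : (v.1 ++ t.1) <:+: w
      · rw [dif_pos h2, fmul_some,
          dif_neg (fun hh => h (by simpa [List.append_assoc] using hh))]
      · rw [dif_neg h2]
        exact (fmul_none_right _).symm
    · rw [dif_neg h1]
      by_cases h2 : (v.1 ++ t.1) <:+: w
      · rw [dif_pos h2, fmul_some,
          dif_neg (fun hh => h1 (List.IsInfix.trans ⟨[], t.1, by simp⟩ hh))]
        rfl
      · rw [dif_neg h2]
        rfl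

instance (w : Word) : Monoid (FM w) where
  mul := fmul
  one := fone w
  mul_assoc := fmul_assoc
  one_mul := by
    rintro (_ | u)
    · rfl
    · show fmul (fone w) (some u) = some u
      rw [fone, fmul_some, dif_pos (by simpa using u.2)]
      simp
      rfl
  mul_one := by
    rintro (_ | u)
    · rfl
    · show fmul (some u) (fone w) = some u
      rw [fone, fmul_some, dif_pos (by simpa using u.2)]
      simp
      rfl

def SatId (M : Type) [Monoid M] (p : Word × Word) : Prop :=
  ∀ φ : ℕ → M, (p.1.map φ).prod = (p.2.map φ).prod

def VSat (E : Set (Word × Word)) (p : Word × Word) : Prop :=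
  ∀ (M : Type) [Monoid M], (∀ q ∈ E, SatId M q) → SatId M p

def ids0 : Set (Word × Word) :=
  {([0,1,2,0,3,1],[1,0,2,0,3,1]), ([0,2,0,1,3,1],[0,2,1,0,3,1]), ([0,2,1,3,0,1],[0,2,1,3,1,0])}

def idA (n : ℕ) : Word × Word :=
  (List.replicate n 0 ++ (List.range n).map (· + 1),
   ((List.range n).map (fun i => [i + 1, 0])).flatten)

def rigid (e₀ : ℕ) (es : List ℕ) : Word :=
  List.replicate e₀ 0 ++ (es.zipIdx.map (fun p => (p.2 + 1) :: List.replicate p.1 0)).flatten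

def Bword (n i : ℕ) : Word := List.replicate i 0 ++ 1 :: List.replicate (n - 1 - i) 0

def wmr (m r : ℕ) : Word := rigid (m - 1) (List.replicate r (m - 1))

def X (p : ℕ) : Word := List.replicate p 0

@[simp]
lemma subst_nil (φ : ℕ → Word) : subst φ [] = [] := rfl

@[simp]
lemma subst_append (φ : ℕ → Word) (u v : Word) : subst φ (u ++ v) = subst φ u ++ subst φ v :=
  List.flatMap_append

@[simp]
lemma subst_cons (φ : ℕ → Word) (i : ℕ) (w : Word) : subst φ (i :: w) = φ i ++ subst φ w :=
  List.flatMap_cons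

lemma subst_X (φ : ℕ → Word) (p : ℕ) (h : φ 0 = [0]) : subst φ (X p) = X p := by
  induction p with
  | zero => rfl
  | succ m ih =>
    rw [X, List.replicate_succ, subst_cons, h]
    exact congrArg _ ih

lemma X_add (p q : ℕ) : X (p + q) = X p ++ X q :=
  List.replicate_add p q 0

lemma subst_var_self (w : Word) : subst (fun i => [i]) w = w := by
  simp [subst]

namespace Deduce

variable {S : Set (Word × Word)} {s t : Word}

lemma of_mem_context (a b : Word) (h : (s, t) ∈ S) : Deduce S (a ++ s ++ b) (a ++ t ++ b) := by
  simpa only [subst_var_self] using step a b (fun i => [i]) h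

lemma subst_of_mem (φ : ℕ → Word) (h : (s, t) ∈ S) : Deduce S (subst φ s) (subst φ t) := by
  simpa only [List.nil_append, List.append_nil] using step [] [] φ h

end Deduce

def eraseVar (v : ℕ) : ℕ → Word := fun i => if i = v then [] else [i]

lemma eraseVar_self (v : ℕ) : eraseVar v v = [] := if_pos rfl

lemma eraseVar_of_ne {v i : ℕ} (h : i ≠ v) : eraseVar v i = [i] := if_neg h

-- Variables: `x = 0`, `h = 1`, `k = 2`.
theorem stmt6_general (n p q p' q' : ℕ)
    (hpq : p + q = n - 1) (hpq' : p' + q' = n - 1) :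
    Deduce {(X p ++ [1] ++ X q, [1] ++ X (n-1)),
            (X (n-1) ++ [2], X p' ++ [2] ++ X q')}
      (X p ++ [1] ++ X q ++ [2]) ([1] ++ X p' ++ [2] ++ X q') ∧
    Deduce {(X p ++ [1] ++ X q ++ [2], [1] ++ X p' ++ [2] ++ X q')}
      (X p ++ [1] ++ X q) ([1] ++ X (n-1)) ∧
    Deduce {(X p ++ [1] ++ X q ++ [2], [1] ++ X p' ++ [2] ++ X q')}
      (X (n-1) ++ [2]) (X p' ++ [2] ++ X q') := by
  refine ⟨?_, ?_, ?_⟩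
  · refine (Deduce.of_mem_context [] [2] (Set.mem_insert _ _)).trans ?_
    simpa using Deduce.of_mem_context [1] [] (Set.mem_insert_of_mem _ (Set.mem_singleton _))
  · convert Deduce.subst_of_mem (eraseVar 2) (Set.mem_singleton _) using 1 <;>
      simp [subst_X, eraseVar_self, eraseVar_of_ne, ← hpq', X_add]
  · convert Deduce.subst_of_mem (eraseVar 1) (Set.mem_singleton _) using 1 <;>
      simp [subst_X, eraseVar_self, eraseVar_of_ne, ← hpq, X_add]

/-- For `n ≥ 3` and `p,q,p',q' ≥ 1` with `p+q = p'+q' = n-1`, the identity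
`x^p h x^q k ≈ h x^{p'} k x^{q'}` is equationally equivalent to the pair
`x^p h x^q ≈ h x^{n-1}` and `x^{n-1} k ≈ x^{p'} k x^{q'}`.
(Variables: `x = 0`, `h = 1`, `k = 2`.) -/
theorem stmt6 (n p q p' q' : ℕ) (hn : 3 ≤ n)
    (hp : 1 ≤ p) (hq : 1 ≤ q) (hp' : 1 ≤ p') (hq' : 1 ≤ q')
    (hpq : p + q = n - 1) (hpq' : p' + q' = n - 1) :
    Deduce {(X p ++ [1] ++ X q, [1] ++ X (n-1)),
            (X (n-1) ++ [2], X p' ++ [2] ++ X q')}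
      (X p ++ [1] ++ X q ++ [2]) ([1] ++ X p' ++ [2] ++ X q') ∧
    Deduce {(X p ++ [1] ++ X q ++ [2], [1] ++ X p' ++ [2] ++ X q')}
      (X p ++ [1] ++ X q) ([1] ++ X (n-1)) ∧
    Deduce {(X p ++ [1] ++ X q ++ [2], [1] ++ X p' ++ [2] ++ X q')}
      (X (n-1) ++ [2]) (X p' ++ [2] ++ X q') :=
  stmt6_general n p q p' q' hpq hpq'
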